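/- Let n ≥ 2. Suppose (a_k)_{k=0}^{n-1} are rational numbers, with the convention a_n = 0, satisfying a_0 + a_1 = -1 and ∑_{k=0}^{l} (a_k + (k+1)a_{k+1})/(l-k)! = 0 for all 1 ≤ l ≤ n-1. Then necessarily a_0 = -n and a_k = (-1)^k/(k-1)! + (-1)^{k+1} n/k! for 1 ≤ k ≤ n-1. -/

import Mathlib

/-!
Put `b l = a l + (l + 1) * a (l + 1)`. The hypotheses say that the convolution of `b` with
`1 / j!` is `-1, 0, …, 0`; so is that of `(-1) ^ (l + 1) / l!`, the coefficients of `-exp (-x)`,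
because `exp (-x) * exp x = 1`. The convolution is unitriangular, hence `b l = (-1) ^ (l + 1) / l!`.
The recurrence `a l = b l - (l + 1) * a (l + 1)`, started from `a n = 0`, then determines `a`
downwards, and the closed form satisfies it.
-/

open Finset Nat

theorem sum_range_neg_one_pow_div_factorial_mul_factorial {K : Type*} [Field K] [CharZero K]
    {l : ℕ} (hl : l ≠ 0) :
    ∑ k ∈ range (l + 1), (-1 : K) ^ k / (k ! * (l - k)! : K) = 0 := by
  have hchoose : ∑ k ∈ range (l + 1), (-1 : K) ^ k * (l.choose k : K) = 0 := by
    exact_mod_cast congrArg (Int.cast : ℤ → K) (Int.alternating_sum_range_choose_of_ne hl)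
  calc ∑ k ∈ range (l + 1), (-1 : K) ^ k / (k ! * (l - k)! : K)
      = (l ! : K)⁻¹ * ∑ k ∈ range (l + 1), (-1 : K) ^ k * (l.choose k : K) := by
        rw [mul_sum]
        refine sum_congr rfl fun k hk => ?_
        rw [Nat.cast_choose K (Nat.lt_succ_iff.mp (mem_range.mp hk))]
        have hl! : (l ! : K) ≠ 0 := Nat.cast_ne_zero.mpr l.factorial_ne_zero
        field_simp
    _ = 0 := by rw [hchoose, mul_zero]

theorem eq_of_sum_div_factorial_eq {K : Type*} [DivisionRing K] {x y : ℕ → K} {N : ℕ}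
    (h : ∀ l ≤ N, ∑ k ∈ range (l + 1), x k / ((l - k)! : K)
      = ∑ k ∈ range (l + 1), y k / ((l - k)! : K)) :
    ∀ l ≤ N, x l = y l := by
  intro l
  induction l using Nat.strong_induction_on with
  | _ l ih =>
    intro hl
    have hlow : ∑ k ∈ range l, x k / ((l - k)! : K) = ∑ k ∈ range l, y k / ((l - k)! : K) :=
      sum_congr rfl fun k hk => by rw [ih k (mem_range.mp hk) ((mem_range.mp hk).le.trans hl)]
    simpa [sum_range_succ, hlow] using h l hl

theorem eq_of_backward_recurrence {α : Type*} {x y : ℕ → α} (f : ℕ → α → α) {m n : ℕ}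
    (hx : ∀ k, m ≤ k → k < n → x k = f k (x (k + 1)))
    (hy : ∀ k, m ≤ k → k < n → y k = f k (y (k + 1))) (hxy : x n = y n) :
    ∀ k, m ≤ k → k ≤ n → x k = y k := by
  intro k hmk hkn
  induction hkn using Nat.decreasingInduction with
  | self => exact hxy
  | of_succ k hk ih => rw [hx k hmk hk, hy k hmk hk, ih (by omega)]

def coeffClosedForm (n k : ℕ) : ℚ :=
  (-1) ^ k / ((k - 1)! : ℚ) + (-1) ^ (k + 1) * (n : ℚ) / (k ! : ℚ)

theorem coeffClosedForm_self {n : ℕ} (hn : n ≠ 0) : coeffClosedForm n n = 0 := by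
  obtain ⟨m, rfl⟩ := Nat.exists_eq_succ_of_ne_zero hn
  simp only [coeffClosedForm, Nat.factorial_succ]
  push_cast
  field_simp
  ring

theorem coeffClosedForm_add_mul_succ (n : ℕ) {k : ℕ} (hk : k ≠ 0) :
    coeffClosedForm n k + (k + 1) * coeffClosedForm n (k + 1) = (-1) ^ (k + 1) / (k ! : ℚ) := by
  obtain ⟨m, rfl⟩ := Nat.exists_eq_succ_of_ne_zero hk
  simp only [coeffClosedForm, Nat.add_sub_cancel, Nat.factorial_succ]
  push_cast
  field_simp
  ring

/-- uniqueness: For `n ≥ 2`, if rationals `a_0, …, a_{n-1}` (with `a_n = 0`)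
satisfy `a_0 + a_1 = -1` and `∑_{k=0}^{l} (a_k + (k+1)a_{k+1})/(l-k)! = 0` for all
`1 ≤ l ≤ n-1`, then `a_0 = -n` and `a_k = (-1)^k/(k-1)! + (-1)^{k+1} n/k!` for
`1 ≤ k ≤ n-1`. -/
theorem coefficients_unique (n : ℕ) (hn : 2 ≤ n) (a : ℕ → ℚ)
    (han : a n = 0)
    (h1 : a 0 + a 1 = -1)
    (h2 : ∀ l : ℕ, 1 ≤ l → l ≤ n - 1 →
      ∑ k ∈ Finset.range (l + 1),
        (a k + ((k : ℚ) + 1) * a (k + 1)) / (((l - k).factorial : ℚ)) = 0) :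
    a 0 = -(n : ℚ) ∧
      ∀ k : ℕ, 1 ≤ k → k ≤ n - 1 →
        a k = (-1) ^ k / ((k - 1).factorial : ℚ)
          + (-1) ^ (k + 1) * (n : ℚ) / (k.factorial : ℚ) := by
  have hb : ∀ l ≤ n - 1, a l + (l + 1) * a (l + 1) = (-1) ^ (l + 1) / (l ! : ℚ) := by
    refine eq_of_sum_div_factorial_eq fun l hl => ?_
    rcases Nat.eq_zero_or_pos l with rfl | hl0
    · simpa using h1
    · rw [h2 l hl0 hl]
      simp_rw [div_div, pow_succ, mul_neg_one, neg_div, sum_neg_distrib,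
        sum_range_neg_one_pow_div_factorial_mul_factorial hl0.ne', neg_zero]
  have hak : ∀ k, 1 ≤ k → k ≤ n → a k = coeffClosedForm n k :=
    eq_of_backward_recurrence (fun k v => (-1) ^ (k + 1) / (k ! : ℚ) - (k + 1) * v)
      (fun k _ hk => eq_sub_of_add_eq (hb k (by omega)))
      (fun k hk _ => eq_sub_of_add_eq (coeffClosedForm_add_mul_succ n (by omega)))
      (by rw [han, coeffClosedForm_self (by omega)])
  refine ⟨?_, fun k hk1 hkn => hak k hk1 (by omega)⟩
  have ha1 := hak 1 le_rfl (by omega)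
  simp only [coeffClosedForm, pow_one, tsub_self, factorial_zero, cast_one, div_one, reduceAdd,
    even_two, Even.neg_pow, one_pow, one_mul, factorial_one] at ha1
  linarith
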